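/- Let G be a graph of order n ≥ 3 with no isolated vertices. Then γ_tR(G) = 4 if and only if either G is the disjoint union of two copies of K_2, or Δ(G) ≤ n − 2 and there exist adjacent vertices u and v with N[u] ∪ N[v] = V(G). -/

import Mathlib

open Finset

/-- A graph has no isolated vertices. -/
def SimpleGraph.IsolateFree {V : Type*} (G : SimpleGraph V) : Prop :=
  ∀ v, ∃ u, G.Adj v u

/-- A Roman dominating function. -/
def SimpleGraph.IsRDF {V : Type*} (G : SimpleGraph V) (f : V → Fin 3) : Prop :=
  ∀ v, f v = 0 → ∃ u, G.Adj v u ∧ f u = 2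

/-- A total Roman dominating function. -/
def SimpleGraph.IsTRDF {V : Type*} (G : SimpleGraph V) (f : V → Fin 3) : Prop :=
  (∀ v, f v = 0 → ∃ u, G.Adj v u ∧ f u = 2) ∧
  (∀ v, f v ≠ 0 → ∃ u, G.Adj v u ∧ f u ≠ 0)

/-- The Roman domination number. -/
noncomputable def SimpleGraph.rdn {V : Type*} [Fintype V] (G : SimpleGraph V) : ℕ :=
  sInf {w | ∃ f : V → Fin 3, G.IsRDF f ∧ w = ∑ v, (f v : ℕ)}

/-- The total Roman domination number. -/
noncomputable def SimpleGraph.trdn {V : Type*} [Fintype V] (G : SimpleGraph V) : ℕ :=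
  sInf {w | ∃ f : V → Fin 3, G.IsTRDF f ∧ w = ∑ v, (f v : ℕ)}

/-- A total dominating set. -/
def SimpleGraph.IsTDS {V : Type*} (G : SimpleGraph V) (S : Finset V) : Prop :=
  ∀ v, ∃ u ∈ S, G.Adj v u

/-- A dominating set. -/
def SimpleGraph.IsDS {V : Type*} (G : SimpleGraph V) (S : Finset V) : Prop :=
  ∀ v, v ∈ S ∨ ∃ u ∈ S, G.Adj v u

/-- The total domination number. -/
noncomputable def SimpleGraph.tdn {V : Type*} [Fintype V] (G : SimpleGraph V) : ℕ :=
  sInf {n | ∃ S : Finset V, G.IsTDS S ∧ n = S.card}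

/-- The domination number. -/
noncomputable def SimpleGraph.dn {V : Type*} [Fintype V] (G : SimpleGraph V) : ℕ :=
  sInf {n | ∃ S : Finset V, G.IsDS S ∧ n = S.card}

/-- The total Roman bondage number, in ℕ∞ (∞ if no valid edge set exists). -/
noncomputable def SimpleGraph.btR {V : Type*} [Fintype V] (G : SimpleGraph V) : ℕ∞ :=
  sInf {n : ℕ∞ | ∃ E' : Finset (Sym2 V), ↑E' ⊆ G.edgeSet ∧
    (G.deleteEdges ↑E').IsolateFree ∧ G.trdn < (G.deleteEdges ↑E').trdn ∧ n = E'.card}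

/-- The total bondage number, in ℕ∞. -/
noncomputable def SimpleGraph.bt {V : Type*} [Fintype V] (G : SimpleGraph V) : ℕ∞ :=
  sInf {n : ℕ∞ | ∃ E' : Finset (Sym2 V), ↑E' ⊆ G.edgeSet ∧
    (G.deleteEdges ↑E').IsolateFree ∧ G.tdn < (G.deleteEdges ↑E').tdn ∧ n = E'.card}

/-- The bondage number, in ℕ∞. -/
noncomputable def SimpleGraph.bond {V : Type*} [Fintype V] (G : SimpleGraph V) : ℕ∞ :=
  sInf {n : ℕ∞ | ∃ E' : Finset (Sym2 V), ↑E' ⊆ G.edgeSet ∧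
    G.dn < (G.deleteEdges ↑E').dn ∧ n = E'.card}

/-- The vertex cover number. -/
noncomputable def SimpleGraph.vcn {V : Type*} [Fintype V] (G : SimpleGraph V) : ℕ :=
  sInf {n | ∃ S : Finset V, (∀ u v, G.Adj u v → u ∈ S ∨ v ∈ S) ∧ n = S.card}

/-- The S-external private neighborhood of v. -/
def SimpleGraph.epn {V : Type*} (G : SimpleGraph V) (v : V) (S : Set V) : Set V :=
  {w | w ∉ S ∧ G.Adj w v ∧ ∀ x ∈ S, G.Adj w x → x = v}

/-!
A total Roman dominating function of weight at most 3 forces a universal vertex: either it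
labels one vertex `a` by 2, and then every vertex besides `a` and a labelled neighbour of `a` is
labelled 0 and sees `a`, or it is the all-1 function on three vertices. As a universal vertex
and a neighbour labelled `2, 1` have weight 3, for `n ≥ 3` we get `γ_tR(G) ≤ 3 ↔ Δ(G) = n - 1`.

Let `f` have weight 4. If `f a = 2`, then `a` and a labelled neighbour `x` carry weight 3, and a
vertex outside `N[a] ∪ N[x]` would need a further labelled neighbour, pushing the weight to 5.
Otherwise `f` is the all-1 function on four vertices, and unless `G = 2K₂` a vertex of degree 2
and a neighbour of the remaining vertex form a dominating edge. Conversely, labelling a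
dominating edge `2, 2` (or every vertex 1 when `n = 4`) gives weight 4.
-/

theorem List.Nodup.sum_map_le_sum_univ {V : Type*} [Fintype V] (f : V → ℕ) {l : List V}
    (hl : l.Nodup) : (l.map f).sum ≤ ∑ v, f v := by
  classical
  rw [← List.sum_toFinset _ hl]
  exact sum_le_sum_of_subset (subset_univ _)

namespace SimpleGraph

variable {V : Type*} {G : SimpleGraph V}

theorem IsolateFree.isTRDF_const (hG : G.IsolateFree) {c : Fin 3} (hc : c ≠ 0) :
    G.IsTRDF fun _ => c :=
  ⟨fun _ h => absurd h hc, fun v _ => (hG v).imp fun _ hu => ⟨hu, hc⟩⟩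

theorem IsTRDF.eq_one_of_forall_ne_two {f : V → Fin 3} (hf : G.IsTRDF f) (h2 : ∀ v, f v ≠ 2)
    (v : V) : f v = 1 := by
  have hv0 : f v ≠ 0 := fun hv0 => (hf.1 v hv0).elim fun z hz => h2 z hz.2
  have := h2 v
  omega

variable [Fintype V]

theorem _root_.List.Nodup.length_le_degree [DecidableRel G.Adj] {v : V} {l : List V}
    (hl : l.Nodup) (hadj : ∀ u ∈ l, G.Adj v u) : l.length ≤ G.degree v := by
  classical
  rw [← List.toFinset_card_of_nodup hl, ← card_neighborFinset_eq_degree]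
  exact card_le_card fun u hu => (mem_neighborFinset G v u).2 (hadj u (List.mem_toFinset.1 hu))

theorem degree_le_one_of_existsUnique [DecidableRel G.Adj] {v : V} (h : ∃! u, G.Adj v u) :
    G.degree v ≤ 1 := by
  rw [← card_neighborFinset_eq_degree]
  exact card_le_one.2 fun a ha b hb => h.unique (by simpa using ha) (by simpa using hb)

theorem card_sub_one_le_maxDegree_iff [DecidableRel G.Adj] [Nonempty V] :
    Fintype.card V - 1 ≤ G.maxDegree ↔ ∃ v, G.IsUniversal v := by
  constructor
  · intro h
    obtain ⟨v, hv⟩ := G.exists_maximal_degree_vertex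
    have := G.maxDegree_lt_card_verts
    exact ⟨v, (degree_eq_card_sub_one G v).1 (by omega)⟩
  · rintro ⟨v, hv⟩
    exact (degree_eq_card_sub_one G v).2 hv ▸ G.degree_le_maxDegree v

theorem trdn_le_sum {f : V → Fin 3} (hf : G.IsTRDF f) : G.trdn ≤ ∑ v, (f v : ℕ) :=
  Nat.sInf_le ⟨f, hf, rfl⟩

theorem IsolateFree.exists_isTRDF_sum_eq_trdn (hG : G.IsolateFree) :
    ∃ f : V → Fin 3, G.IsTRDF f ∧ ∑ v, (f v : ℕ) = G.trdn := by
  have hne : {w | ∃ f : V → Fin 3, G.IsTRDF f ∧ w = ∑ v, (f v : ℕ)}.Nonempty :=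
    ⟨_, fun _ => 2, hG.isTRDF_const (by decide), rfl⟩
  obtain ⟨f, hf, hsum⟩ := Nat.sInf_mem hne
  exact ⟨f, hf, hsum.symm⟩

theorem IsolateFree.trdn_le_card (hG : G.IsolateFree) : G.trdn ≤ Fintype.card V := by
  simpa using trdn_le_sum (hG.isTRDF_const (c := 1) (by decide))

theorem trdn_le_add_of_adj [DecidableEq V] {u w : V} {p q : Fin 3} (huw : G.Adj u w)
    (hp : p ≠ 0) (hq : q ≠ 0)
    (hdom : ∀ x, x ≠ u → x ≠ w → G.Adj x u ∧ p = 2 ∨ G.Adj x w ∧ q = 2) :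
    G.trdn ≤ (p : ℕ) + q := by
  set f : V → Fin 3 := fun x => if x = u then p else if x = w then q else 0
  have hfu : f u = p := if_pos rfl
  have hfw : f w = q := by simp [f, huw.ne']
  have hf : G.IsTRDF f := by
    refine ⟨fun x hx => ?_, fun x hx => ?_⟩
    · have hxu : x ≠ u := by rintro rfl; exact hp (hfu ▸ hx)
      have hxw : x ≠ w := by rintro rfl; exact hq (hfw ▸ hx)
      rcases hdom x hxu hxw with ⟨hxu, hp2⟩ | ⟨hxw, hq2⟩
      exacts [⟨u, hxu, hfu.trans hp2⟩, ⟨w, hxw, hfw.trans hq2⟩]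
    · by_cases hxu : x = u
      · exact hxu ▸ ⟨w, huw, hfw ▸ hq⟩
      · have hxw : x = w := by by_contra hxw; simp [f, hxu, hxw] at hx
        exact hxw ▸ ⟨u, huw.symm, hfu ▸ hp⟩
  have hsum : ∑ x, (f x : ℕ) = p + q := by
    rw [Fintype.sum_eq_add u w huw.ne fun x hx => by simp [f, hx.1, hx.2], hfu, hfw]
  exact hsum ▸ trdn_le_sum hf

theorem IsUniversal.trdn_le_three (hG : G.IsolateFree) {v : V} (hv : G.IsUniversal v) :
    G.trdn ≤ 3 := by
  classical
  obtain ⟨w, hvw⟩ := hG v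
  exact trdn_le_add_of_adj (p := 2) (q := 1) hvw (by decide) (by decide)
    fun x hxv _ => Or.inl ⟨(hv (Ne.symm hxv)).symm, rfl⟩

theorem trdn_le_four_of_adj {u v : V} (huv : G.Adj u v)
    (hcov : ∀ w, w ∈ G.neighborSet u ∪ {u} ∪ (G.neighborSet v ∪ {v})) : G.trdn ≤ 4 := by
  classical
  refine trdn_le_add_of_adj (p := 2) (q := 2) huv (by decide) (by decide) fun x hxu hxv => ?_
  have hx := hcov x
  simp only [Set.mem_union, Set.mem_singleton_iff, mem_neighborSet, hxu, hxv, or_false] at hx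
  exact hx.imp (fun h => ⟨h.symm, rfl⟩) fun h => ⟨h.symm, rfl⟩

namespace IsTRDF

variable {f : V → Fin 3}

theorem sum_eq_card_of_forall_ne_two (hf : G.IsTRDF f) (h2 : ∀ v, f v ≠ 2) :
    ∑ v, (f v : ℕ) = Fintype.card V := by
  simp [hf.eq_one_of_forall_ne_two h2]

theorem isUniversal_of_sum_le_three (hf : G.IsTRDF f) (h3 : ∑ v, (f v : ℕ) ≤ 3) {a : V}
    (ha : f a = 2) : G.IsUniversal a := by
  obtain ⟨x, hax, hx⟩ := hf.2 a (by omega)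
  intro w haw
  by_cases hwx : w = x
  · exact hwx ▸ hax
  have hw0 : f w = 0 := by
    by_contra hw0
    have := List.Nodup.sum_map_le_sum_univ (fun v => (f v : ℕ)) (l := [a, x, w])
      (by simp [hax.ne, haw, Ne.symm hwx])
    simp only [List.map_cons, List.map_nil, List.sum_cons, List.sum_nil] at this
    omega
  obtain ⟨z, hwz, hz⟩ := hf.1 w hw0
  have hza : z = a := by
    by_contra hza
    have := List.Nodup.sum_map_le_sum_univ (fun v => (f v : ℕ)) (l := [a, z])
      (by simp [Ne.symm hza])
    simp only [List.map_cons, List.map_nil, List.sum_cons, List.sum_nil] at this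
    omega
  exact hza ▸ hwz.symm

theorem exists_isUniversal_of_forall_ne_two (hf : G.IsTRDF f) (h3 : ∑ v, (f v : ℕ) ≤ 3)
    (hn : 3 ≤ Fintype.card V) (h2 : ∀ v, f v ≠ 2) : ∃ v, G.IsUniversal v := by
  classical
  have hV : Fintype.card V = 3 := by
    have := hf.sum_eq_card_of_forall_ne_two h2
    omega
  have h1 := hf.eq_one_of_forall_ne_two h2
  have no_four_distinct {a b c d : V} (h : [a, b, c, d].Nodup) : False := by
    have := h.length_le_card
    simp only [List.length_cons, List.length_nil, hV] at this
    omega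
  obtain ⟨v⟩ : Nonempty V := Fintype.card_pos_iff.1 (by omega)
  obtain ⟨u, hvu, -⟩ := hf.2 v (by simp [h1])
  obtain ⟨w, -, hw⟩ := exists_mem_notMem_of_card_lt_card (s := {u, v}) (t := univ)
    (card_le_two.trans_lt (by rw [card_univ]; omega))
  simp only [mem_insert, mem_singleton, not_or] at hw
  obtain ⟨z, hwz, -⟩ := hf.2 w (by simp [h1])
  have hz : z = u ∨ z = v := by
    by_contra hz
    push Not at hz
    exact no_four_distinct (a := u) (b := v) (c := w) (d := z)
      (by simp [hvu.ne', hwz.ne, Ne.symm hw.1, Ne.symm hw.2, Ne.symm hz.1, Ne.symm hz.2])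
  obtain ⟨z, z', hzz', hzw, hwz'⟩ : ∃ z z', G.Adj z z' ∧ G.Adj z w ∧ w ≠ z' := by
    rcases hz with rfl | rfl
    exacts [⟨z, v, hvu.symm, hwz.symm, hw.2⟩, ⟨z, u, hvu, hwz.symm, hw.1⟩]
  refine ⟨z, fun y hzy => ?_⟩
  by_cases hyz' : y = z'
  · exact hyz' ▸ hzz'
  by_cases hyw : y = w
  · exact hyw ▸ hzw
  exact (no_four_distinct (a := z) (b := z') (c := w) (d := y)
    (by simp [hzz'.ne, hzw.ne, hzy, Ne.symm hwz', Ne.symm hyz', Ne.symm hyw])).elim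

theorem mem_closedNbhd_of_sum_le_four (hf : G.IsTRDF f) (h4 : ∑ v, (f v : ℕ) ≤ 4) {a x : V}
    (ha : f a = 2) (hax : G.Adj a x) (hx : f x ≠ 0) (w : V) :
    w ∈ G.neighborSet a ∪ {a} ∪ (G.neighborSet x ∪ {x}) := by
  simp only [Set.mem_union, Set.mem_singleton_iff, mem_neighborSet]
  by_cases hwa : w = a
  · exact Or.inl (Or.inr hwa)
  by_cases hwx : w = x
  · exact Or.inr (Or.inr hwx)
  have hz : ∃ z, G.Adj w z ∧ (z = a ∨ z = x) := by
    by_cases hw0 : f w = 0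
    · obtain ⟨z, hwz, hz⟩ := hf.1 w hw0
      refine ⟨z, hwz, ?_⟩
      by_contra hz'
      push Not at hz'
      have := List.Nodup.sum_map_le_sum_univ (fun v => (f v : ℕ)) (l := [a, x, z])
        (by simp [hax.ne, Ne.symm hz'.1, Ne.symm hz'.2])
      simp only [List.map_cons, List.map_nil, List.sum_cons, List.sum_nil] at this
      omega
    · obtain ⟨z, hwz, hz⟩ := hf.2 w hw0
      refine ⟨z, hwz, ?_⟩
      by_contra hz'
      push Not at hz'
      have := List.Nodup.sum_map_le_sum_univ (fun v => (f v : ℕ)) (l := [a, x, w, z])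
        (by simp [hax.ne, hwz.ne, Ne.symm hz'.1, Ne.symm hz'.2, Ne.symm hwa, Ne.symm hwx])
      simp only [List.map_cons, List.map_nil, List.sum_cons, List.sum_nil] at this
      omega
  obtain ⟨z, hwz, rfl | rfl⟩ := hz
  exacts [Or.inl (Or.inl hwz.symm), Or.inr (Or.inl hwz.symm)]

end IsTRDF

theorem exists_dominating_edge_of_card_eq_four [DecidableRel G.Adj] (hG : G.IsolateFree)
    (h4 : Fintype.card V = 4) (hΔ : G.maxDegree ≤ 2) (hm : ¬ ∀ v, ∃! u, G.Adj v u) :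
    ∃ u v, G.Adj u v ∧ ∀ w, w ∈ G.neighborSet u ∪ {u} ∪ (G.neighborSet v ∪ {v}) := by
  classical
  obtain ⟨v, a, b, hva, hvb, hab⟩ : ∃ v a b, G.Adj v a ∧ G.Adj v b ∧ a ≠ b := by
    obtain ⟨v, hv⟩ := not_forall.1 hm
    obtain ⟨a, ha⟩ := hG v
    obtain ⟨b, hb, hba⟩ : ∃ b, G.Adj v b ∧ b ≠ a := by
      by_contra! h
      exact hv ⟨a, ha, h⟩
    exact ⟨v, a, b, ha, hb, Ne.symm hba⟩
  obtain ⟨c, -, hc⟩ := exists_mem_notMem_of_card_lt_card (s := {v, a, b}) (t := univ)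
    (card_le_three.trans_lt (by simp [h4]))
  simp only [mem_insert, mem_singleton, not_or] at hc
  have hcover (y : V) : y = v ∨ y = a ∨ y = b ∨ y = c := by
    by_contra hy
    push Not at hy
    have := List.Nodup.length_le_card (l := [v, a, b, c, y])
      (by simp [hva.ne, hvb.ne, hab, Ne.symm hc.1, Ne.symm hc.2.1, Ne.symm hc.2.2,
        Ne.symm hy.1, Ne.symm hy.2.1, Ne.symm hy.2.2.1, Ne.symm hy.2.2.2])
    simp [h4] at this
  -- `d = v` would give `v` the three neighbours `a, b, c`
  obtain ⟨d, hvd, hcd⟩ : ∃ d, G.Adj v d ∧ G.Adj c d := by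
    obtain ⟨d, hcd⟩ := hG c
    rcases hcover d with rfl | rfl | rfl | rfl
    · have h3 := List.Nodup.length_le_degree (G := G) (l := [a, b, c]) (v := d)
        (by simp [hab, Ne.symm hc.2.1, Ne.symm hc.2.2]) (by simp [hva, hvb, hcd.symm])
      have := G.degree_le_maxDegree d
      simp only [List.length_cons, List.length_nil] at h3
      omega
    exacts [⟨d, hva, hcd⟩, ⟨d, hvb, hcd⟩, (hcd.ne rfl).elim]
  refine ⟨v, d, hvd, fun y => ?_⟩
  simp only [Set.mem_union, Set.mem_singleton_iff, mem_neighborSet]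
  rcases hcover y with rfl | rfl | rfl | rfl
  exacts [Or.inl (Or.inr rfl), Or.inl (Or.inl hva), Or.inl (Or.inl hvb), Or.inr (Or.inl hcd.symm)]

theorem IsolateFree.trdn_le_three_iff [DecidableRel G.Adj] (hG : G.IsolateFree)
    (hn : 3 ≤ Fintype.card V) : G.trdn ≤ 3 ↔ Fintype.card V - 1 ≤ G.maxDegree := by
  have : Nonempty V := Fintype.card_pos_iff.1 (by omega)
  rw [card_sub_one_le_maxDegree_iff]
  constructor
  · intro h3
    obtain ⟨f, hf, hsum⟩ := hG.exists_isTRDF_sum_eq_trdn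
    by_cases h2 : ∃ a, f a = 2
    · obtain ⟨a, ha⟩ := h2
      exact ⟨a, hf.isUniversal_of_sum_le_three (by omega) ha⟩
    · exact hf.exists_isUniversal_of_forall_ne_two (by omega) hn (not_exists.1 h2)
  · rintro ⟨v, hv⟩
    exact hv.trdn_le_three hG

end SimpleGraph

theorem stmt_7 {V : Type*} [Fintype V] (G : SimpleGraph V) [DecidableRel G.Adj]
    (hG : G.IsolateFree) (hn : 3 ≤ Fintype.card V) :
    G.trdn = 4 ↔
      ((Fintype.card V = 4 ∧ ∀ v, ∃! u, G.Adj v u) ∨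
       (G.maxDegree ≤ Fintype.card V - 2 ∧
        ∃ u v, G.Adj u v ∧ ∀ w, w ∈ G.neighborSet u ∪ {u} ∪ (G.neighborSet v ∪ {v}))) := by
  constructor
  · intro h4
    have hΔ : G.maxDegree ≤ Fintype.card V - 2 := by
      have := (hG.trdn_le_three_iff hn).not.1 (by omega)
      omega
    obtain ⟨f, hf, hsum⟩ := hG.exists_isTRDF_sum_eq_trdn
    by_cases h2 : ∃ a, f a = 2
    · obtain ⟨a, ha⟩ := h2
      obtain ⟨x, hax, hx⟩ := hf.2 a (by omega)
      exact Or.inr ⟨hΔ, a, x, hax, hf.mem_closedNbhd_of_sum_le_four (by omega) ha hax hx⟩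
    · have hV : Fintype.card V = 4 := by
        rw [← hf.sum_eq_card_of_forall_ne_two (not_exists.1 h2), hsum, h4]
      by_cases hm : ∀ v, ∃! u, G.Adj v u
      · exact Or.inl ⟨hV, hm⟩
      · exact Or.inr
          ⟨hΔ, SimpleGraph.exists_dominating_edge_of_card_eq_four hG hV (by omega) hm⟩
  · rintro (⟨hV, hm⟩ | ⟨hΔ, u, v, huv, hcov⟩)
    · refine le_antisymm (hV ▸ hG.trdn_le_card) (not_lt.1 fun h3 => ?_)
      have : Nonempty V := Fintype.card_pos_iff.1 (by omega)
      obtain ⟨v, hv⟩ := SimpleGraph.card_sub_one_le_maxDegree_iff.1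
        ((hG.trdn_le_three_iff hn).1 (by omega))
      have := SimpleGraph.degree_le_one_of_existsUnique (hm v)
      rw [(G.degree_eq_card_sub_one v).2 hv] at this
      omega
    · refine le_antisymm (SimpleGraph.trdn_le_four_of_adj huv hcov) (not_lt.1 fun h3 => ?_)
      have := (hG.trdn_le_three_iff hn).1 (by omega)
      omega
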